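/- Let A be an n×m real matrix with a unique saddle point (x*,y*) of xᵀAy over Δₙ×Δₘ, and let B be the submatrix of A restricted to the rows in Supp(x*) and columns in Supp(y*). If x̃ ∈ ℝ^{|Supp(x*)|} and ỹ ∈ ℝ^{|Supp(y*)|} satisfy Bỹ = 0, Bᵀx̃ = 0, 1ᵀx̃ = 0 and 1ᵀỹ = 0, then x̃ = 0 and ỹ = 0. -/

import Mathlib

/-!
By Farkas' lemma, a unique saddle point `(x*, y*)` is strictly complementary: a column `j` with
`y*ⱼ = 0` pays strictly more than the value against `x*`, for otherwise there would be an optimal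
`y` with `yⱼ > 0` or an optimal `x` with `(xᵀA)ⱼ` above the value, contradicting uniqueness.
Given `x̃` supported on `Supp(x*)` with `1ᵀx̃ = 0` and `Bᵀx̃ = 0`, strict complementarity makes
`(x* + t x̃, y*)` a saddle point for all small `t > 0`, so `x̃ = 0`. The claim for `ỹ` is the same
argument applied to the game `-Aᵀ`, whose saddle points are those of `A` with the players swapped.
-/

open Matrix Finset Filter Topology

theorem div_smul_add_sum_smul_eq_of_sum_smul_sub_smul_eq {ι 𝕜 V : Type*} [Field 𝕜]
    [AddCommGroup V] [Module 𝕜 V] {s : Finset ι} {u a : ι → 𝕜} {w : ι → V} {v b : V}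
    {α β : 𝕜} (hα : α ≠ 0)
    (h : ∑ i ∈ s, u i • (a i • v - α • w i) = β • v - α • b) :
    ((∑ i ∈ s, u i * a i - β) / -α) • v + ∑ i ∈ s, u i • w i = b := by
  have h' : (∑ i ∈ s, u i * a i) • v - α • ∑ i ∈ s, u i • w i = β • v - α • b := by
    rw [← h, sum_smul, smul_sum, ← sum_sub_distrib]
    simp only [smul_sub, mul_smul, smul_comm (u _) α]
  have hcoef : α * ((∑ i ∈ s, u i * a i - β) / -α) = β - ∑ i ∈ s, u i * a i := by
    field_simp; ring
  apply smul_right_injective V hα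
  simp only [smul_add, smul_smul, hcoef]
  linear_combination (norm := module) -h'

section Farkas

variable {ι κ 𝕜 : Type*} [Field 𝕜] [LinearOrder 𝕜] [IsStrictOrderedRing 𝕜] [Fintype κ]

theorem exists_nonneg_sum_smul_eq_or_exists_dotProduct_neg (s : Finset ι)
    (c : ι → κ → 𝕜) (b : κ → 𝕜) :
    (∃ u : ι → 𝕜, 0 ≤ u ∧ ∑ i ∈ s, u i • c i = b) ∨
      ∃ z : κ → 𝕜, (∀ i ∈ s, 0 ≤ c i ⬝ᵥ z) ∧ b ⬝ᵥ z < 0 := by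
  classical
  induction s using Finset.induction_on generalizing c b with
  | empty =>
    by_cases hb : b = 0
    · exact .inl ⟨0, le_rfl, by simp [hb]⟩
    · refine .inr ⟨-b, by simp, ?_⟩
      have : 0 < b ⬝ᵥ b := (Finset.sum_nonneg fun i _ => mul_self_nonneg (b i)).lt_of_ne'
        (dotProduct_self_eq_zero.not.2 hb)
      simpa using this
  | insert k s hk ih =>
    have extend : ∀ (u : ι → 𝕜) (t : 𝕜), 0 ≤ u → 0 ≤ t →
        0 ≤ Function.update u k t ∧
          ∑ i ∈ insert k s, Function.update u k t i • c i = t • c k + ∑ i ∈ s, u i • c i :=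
      fun u t hu ht => ⟨le_update_iff.2 ⟨ht, fun i _ => hu i⟩, by
        rw [sum_insert hk, Function.update_self]
        exact congrArg _ <| sum_congr rfl fun i hi => by
          rw [Function.update_of_ne (ne_of_mem_of_not_mem hi hk)]⟩
    obtain ⟨u, hu, hsum⟩ | ⟨z, hz, hbz⟩ := ih c b
    · obtain ⟨hu', hsum'⟩ := extend u 0 hu le_rfl
      exact .inl ⟨_, hu', by rw [hsum', zero_smul, zero_add, hsum]⟩
    rcases le_or_gt 0 (c k ⬝ᵥ z) with hkz | hkz
    · exact .inr ⟨z, forall_mem_insert _ _ _ |>.2 ⟨hkz, hz⟩, hbz⟩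
    -- Eliminate `c k` along `z`; a certificate `z'` of the reduced system yields the
    -- certificate `(c k ⬝ᵥ z') • z - α • z'` of the original one, which vanishes on `c k`.
    set α := c k ⬝ᵥ z
    obtain ⟨u, hu, hsum⟩ | ⟨z', hz', hbz'⟩ :=
      ih (fun i => (c i ⬝ᵥ z) • c k - α • c i) ((b ⬝ᵥ z) • c k - α • b)
    · have ht : 0 ≤ (∑ i ∈ s, u i * (c i ⬝ᵥ z) - b ⬝ᵥ z) / -α := by
        refine div_nonneg ?_ (by linarith)
        linarith [sum_nonneg fun i hi => mul_nonneg (hu i) (hz i hi)]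
      obtain ⟨hu', hsum'⟩ := extend u _ hu ht
      refine .inl ⟨_, hu', ?_⟩
      rw [hsum']
      exact div_smul_add_sum_smul_eq_of_sum_smul_sub_smul_eq hkz.ne hsum
    · have key : ∀ w, w ⬝ᵥ ((c k ⬝ᵥ z') • z - α • z') = ((w ⬝ᵥ z) • c k - α • w) ⬝ᵥ z' := by
        intro w
        simp only [dotProduct_sub, sub_dotProduct, dotProduct_smul, smul_dotProduct, smul_eq_mul]
        ring
      refine .inr ⟨(c k ⬝ᵥ z') • z - α • z', forall_mem_insert _ _ _ |>.2 ⟨?_, fun i hi => ?_⟩, ?_⟩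
      · simp [key, α]
      · rw [key]; exact hz' i hi
      · rw [key]; exact hbz'

theorem Matrix.exists_mulVec_nonpos_or_exists_vecMul_nonneg [Fintype ι]
    (M : Matrix ι κ 𝕜) (j : κ) :
    (∃ y, 0 ≤ y ∧ M *ᵥ y ≤ 0 ∧ 0 < y j) ∨ ∃ x, 0 ≤ x ∧ 0 ≤ x ᵥ* M ∧ 0 < (x ᵥ* M) j := by
  classical
  -- The unit vectors are slack variables for `M *ᵥ y ≤ 0`; moving column `j` to the right-hand
  -- side forces `y j ≥ 1`.
  obtain ⟨u, hu, hsum⟩ | ⟨z, hz, hbz⟩ := exists_nonneg_sum_smul_eq_or_exists_dotProduct_neg univ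
    (Sum.elim (fun j' => Mᵀ j') (fun i => Pi.single i 1)) (-Mᵀ j)
  · refine .inl ⟨(fun j' => u (.inl j')) + Pi.single j 1, fun j' => ?_, fun i => ?_, ?_⟩
    · exact add_nonneg (hu _) ((Pi.single_nonneg.2 zero_le_one : (0 : κ → 𝕜) ≤ _) j')
    · have h := congrFun hsum i
      simp only [Finset.sum_apply, Pi.smul_apply, smul_eq_mul, Fintype.sum_sum_type, Sum.elim_inl,
        transpose_apply, Sum.elim_inr, Pi.single_apply, mul_ite, mul_one, mul_zero, sum_ite_eq,
        mem_univ, if_true, Pi.neg_apply] at h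
      simp only [mulVec, dotProduct, Pi.add_apply, mul_add, sum_add_distrib, Pi.single_apply,
        mul_ite, mul_one, mul_zero, sum_ite_eq', mem_univ, if_true, Pi.zero_apply]
      rw [sum_congr rfl fun _ _ => mul_comm _ _]
      linarith [show 0 ≤ u (.inr i) from hu _]
    · simp only [Pi.add_apply, Pi.single_eq_same]; linarith [show 0 ≤ u (.inl j) from hu _]
  · refine .inr ⟨z, fun i => by simpa using hz (.inr i) (mem_univ _), fun j' => ?_, ?_⟩
    · exact (hz (.inl j') (mem_univ _)).trans_eq (dotProduct_comm _ _)
    · have : -Mᵀ j ⬝ᵥ z = -(z ᵥ* M) j := by rw [neg_dotProduct, dotProduct_comm]; rfl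
      linarith

end Farkas

section StdSimplex

variable {ι 𝕜 : Type*} [Fintype ι]

theorem dotProduct_le_of_mem_stdSimplex [Semiring 𝕜] [PartialOrder 𝕜] [IsOrderedRing 𝕜]
    {x u : ι → 𝕜} {w : 𝕜} (hx : x ∈ stdSimplex 𝕜 ι) (h : ∀ i, u i ≤ w) : x ⬝ᵥ u ≤ w :=
  calc x ⬝ᵥ u ≤ x ⬝ᵥ fun _ => w := dotProduct_le_dotProduct_of_nonneg_left h hx.1
    _ = w := by simp [dotProduct, ← sum_mul, hx.2]

theorem le_dotProduct_of_mem_stdSimplex [Semiring 𝕜] [PartialOrder 𝕜] [IsOrderedRing 𝕜]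
    {x u : ι → 𝕜} {w : 𝕜} (hx : x ∈ stdSimplex 𝕜 ι) (h : ∀ i, w ≤ u i) : w ≤ x ⬝ᵥ u :=
  calc w = x ⬝ᵥ fun _ => w := by simp [dotProduct, ← sum_mul, hx.2]
    _ ≤ x ⬝ᵥ u := dotProduct_le_dotProduct_of_nonneg_left h hx.1

theorem inv_sum_smul_mem_stdSimplex [Field 𝕜] [LinearOrder 𝕜] [IsStrictOrderedRing 𝕜]
    {y : ι → 𝕜} (hy : 0 ≤ y) (hpos : 0 < ∑ i, y i) : (∑ i, y i)⁻¹ • y ∈ stdSimplex 𝕜 ι :=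
  ⟨fun i => smul_nonneg (inv_nonneg.2 hpos.le) (hy i), by simp [← mul_sum, hpos.ne']⟩

end StdSimplex

theorem eventually_lt_add_mul {a b : ℝ} (c : ℝ) (h : a < b) : ∀ᶠ t in 𝓝 (0 : ℝ), a < b + t * c :=
  ((continuous_const.add (continuous_id.mul continuous_const)).tendsto' 0 b
    (by simp)).eventually_const_lt h

section MatrixGame

variable {ι κ : Type*} [Fintype ι] [Fintype κ]

def IsSaddlePoint (A : Matrix ι κ ℝ) (x : ι → ℝ) (y : κ → ℝ) : Prop :=
  x ∈ stdSimplex ℝ ι ∧ y ∈ stdSimplex ℝ κ ∧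
    (∀ x' ∈ stdSimplex ℝ ι, x' ⬝ᵥ A *ᵥ y ≤ x ⬝ᵥ A *ᵥ y) ∧
    ∀ y' ∈ stdSimplex ℝ κ, x ⬝ᵥ A *ᵥ y ≤ x ⬝ᵥ A *ᵥ y'

namespace IsSaddlePoint

variable {A : Matrix ι κ ℝ} {x : ι → ℝ} {y : κ → ℝ}

theorem of_le_of_le (hx : x ∈ stdSimplex ℝ ι) (hy : y ∈ stdSimplex ℝ κ) {w : ℝ}
    (hrow : ∀ i, (A *ᵥ y) i ≤ w) (hcol : ∀ j, w ≤ (x ᵥ* A) j) : IsSaddlePoint A x y := by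
  have upper : ∀ x' ∈ stdSimplex ℝ ι, x' ⬝ᵥ A *ᵥ y ≤ w := fun x' hx' =>
    dotProduct_le_of_mem_stdSimplex hx' hrow
  have lower : ∀ y' ∈ stdSimplex ℝ κ, w ≤ x ⬝ᵥ A *ᵥ y' := fun y' hy' => by
    rw [dotProduct_mulVec, dotProduct_comm]
    exact le_dotProduct_of_mem_stdSimplex hy' hcol
  have hv : x ⬝ᵥ A *ᵥ y = w := le_antisymm (upper x hx) (lower y hy)
  exact ⟨hx, hy, fun x' hx' => hv ▸ upper x' hx', fun y' hy' => hv ▸ lower y' hy'⟩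

theorem mulVec_le (h : IsSaddlePoint A x y) (i : ι) : (A *ᵥ y) i ≤ x ⬝ᵥ A *ᵥ y := by
  classical
  simpa [single_dotProduct] using h.2.2.1 _ (single_mem_stdSimplex ℝ i)

theorem le_vecMul (h : IsSaddlePoint A x y) (j : κ) : x ⬝ᵥ A *ᵥ y ≤ (x ᵥ* A) j := by
  classical
  have := h.2.2.2 _ (single_mem_stdSimplex ℝ j)
  rwa [dotProduct_mulVec x A (Pi.single j 1), dotProduct_single, mul_one] at this

theorem neg_transpose (h : IsSaddlePoint A x y) : IsSaddlePoint (-Aᵀ) y x :=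
  of_le_of_le h.2.1 h.1 (w := -(x ⬝ᵥ A *ᵥ y))
    (fun j => by simpa [neg_mulVec, mulVec_transpose] using h.le_vecMul j)
    (fun i => by simpa [vecMul_neg, vecMul_transpose] using h.mulVec_le i)

theorem _root_.isSaddlePoint_neg_transpose_iff :
    IsSaddlePoint (-Aᵀ) y x ↔ IsSaddlePoint A x y :=
  ⟨fun h => by simpa using h.neg_transpose, neg_transpose⟩

theorem lt_vecMul_of_eq_zero (h : IsSaddlePoint A x y)
    (huniq : ∀ x' y', IsSaddlePoint A x' y' → x' = x ∧ y' = y) {j : κ} (hj : y j = 0) :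
    x ⬝ᵥ A *ᵥ y < (x ᵥ* A) j := by
  set v := x ⬝ᵥ A *ᵥ y
  let J : Matrix ι κ ℝ := of fun _ _ => v
  obtain ⟨y', hy', hMy', hy'j⟩ | ⟨x', hx', hx'M, hx'Mj⟩ :=
    (A - J).exists_mulVec_nonpos_or_exists_vecMul_nonneg j
  · exfalso
    set σ := ∑ k, y' k
    have hσ : 0 < σ := hy'j.trans_le (single_le_sum (fun k _ => hy' k) (mem_univ j))
    have hrow : ∀ i, (A *ᵥ σ⁻¹ • y') i ≤ v := fun i => by
      have hJ : (J *ᵥ y') i = v * σ := by simp [J, mulVec, dotProduct, ← mul_sum, σ]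
      have := hMy' i
      rw [sub_mulVec, Pi.sub_apply, hJ, Pi.zero_apply] at this
      rw [mulVec_smul, Pi.smul_apply, smul_eq_mul, inv_mul_le_iff₀ hσ]
      linarith
    have hsp := of_le_of_le h.1 (inv_sum_smul_mem_stdSimplex hy' hσ) hrow h.le_vecMul
    have := congrFun (huniq _ _ hsp).2 j
    rw [hj, Pi.smul_apply, smul_eq_mul] at this
    exact (mul_pos (inv_pos.2 hσ) hy'j).ne' this
  · set τ := ∑ i, x' i
    have hJ : ∀ k, (x' ᵥ* J) k = τ * v := fun k => by
      simp [J, vecMul, dotProduct, ← sum_mul, τ]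
    have hτ : 0 < τ := by
      refine (sum_nonneg fun i _ => hx' i).lt_of_ne fun h0 => hx'Mj.ne' ?_
      have : x' = 0 := funext fun i =>
        (sum_eq_zero_iff_of_nonneg fun i _ => hx' i).1 h0.symm i (mem_univ i)
      simp [this]
    have hcol : ∀ k, τ * v ≤ (x' ᵥ* A) k := fun k => by
      have := hx'M k
      rw [vecMul_sub, Pi.sub_apply, hJ, Pi.zero_apply] at this
      linarith
    have hsp : IsSaddlePoint A (τ⁻¹ • x') y :=
      of_le_of_le (inv_sum_smul_mem_stdSimplex hx' hτ) h.2.1 h.mulVec_le fun k => by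
        rw [smul_vecMul, Pi.smul_apply, smul_eq_mul, le_inv_mul_iff₀ hτ]
        exact hcol k
    rw [← (huniq _ _ hsp).1, smul_vecMul, Pi.smul_apply, smul_eq_mul, lt_inv_mul_iff₀ hτ]
    have := hx'Mj
    rw [vecMul_sub, Pi.sub_apply, hJ] at this
    linarith

theorem eq_zero_of_vecMul_eq_zero (h : IsSaddlePoint A x y)
    (huniq : ∀ x' y', IsSaddlePoint A x' y' → x' = x ∧ y' = y) {d : ι → ℝ}
    (hsupp : ∀ i, x i = 0 → d i = 0) (hsum : ∑ i, d i = 0)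
    (hd : ∀ j, 0 < y j → (d ᵥ* A) j = 0) : d = 0 := by
  set v := x ⬝ᵥ A *ᵥ y
  have hnonneg : ∀ i, ∀ᶠ t in 𝓝 (0 : ℝ), 0 ≤ x i + t * d i := fun i => by
    rcases (h.1.1 i).eq_or_lt with hi | hi
    · exact .of_forall fun t => by simp [← hi, hsupp i hi.symm]
    · exact (eventually_lt_add_mul (d i) hi).mono fun t => le_of_lt
  have hcol : ∀ j, ∀ᶠ t in 𝓝 (0 : ℝ), v ≤ (x ᵥ* A) j + t * (d ᵥ* A) j := fun j => by
    rcases (h.2.1.1 j).eq_or_lt with hj | hj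
    · exact (eventually_lt_add_mul _ (h.lt_vecMul_of_eq_zero huniq hj.symm)).mono
        fun t => le_of_lt
    · exact .of_forall fun t => by simpa [hd j hj] using h.le_vecMul j
  obtain ⟨t, ⟨hxt, hct⟩, ht⟩ :=
    (((eventually_all.2 hnonneg).and (eventually_all.2 hcol)).filter_mono
      nhdsWithin_le_nhds |>.and (self_mem_nhdsWithin (s := Set.Ioi 0))).exists
  have hmem : x + t • d ∈ stdSimplex ℝ ι :=
    ⟨hxt, by simp [sum_add_distrib, ← mul_sum, hsum, h.1.2]⟩
  have hsp : IsSaddlePoint A (x + t • d) y :=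
    of_le_of_le hmem h.2.1 h.mulVec_le fun j => by simpa [add_vecMul, smul_vecMul] using hct j
  have htd : t • d = 0 := by simpa using (huniq _ _ hsp).1
  exact (smul_eq_zero.1 htd).resolve_left (ne_of_gt ht)

theorem eq_zero_of_vecMul_submatrix_eq_zero (h : IsSaddlePoint A x y)
    (huniq : ∀ x' y', IsSaddlePoint A x' y' → x' = x ∧ y' = y) (d : {i // 0 < x i} → ℝ)
    (hsum : ∑ i, d i = 0)
    (hd : d ᵥ* A.submatrix Subtype.val (Subtype.val : {j // 0 < y j} → κ) = 0) : d = 0 := by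
  set e : ι → ℝ := Function.extend Subtype.val d 0
  have he : ∀ i : {i // 0 < x i}, e i = d i := Subtype.val_injective.extend_apply d 0
  have he₀ : ∀ i, ¬ 0 < x i → e i = 0 := fun i hi =>
    Function.extend_apply' _ _ _ fun ⟨i', hi'⟩ => hi (hi' ▸ i'.2)
  have sum_e : ∀ f : ι → ℝ, ∑ i, e i * f i = ∑ i : {i // 0 < x i}, d i * f i := fun f => by
    rw [← Fintype.sum_subtype_add_sum_subtype (fun i => 0 < x i)]
    simp [he, fun i : {i // ¬ 0 < x i} => he₀ i i.2]
  have := eq_zero_of_vecMul_eq_zero h huniq (d := e) (fun i hi => he₀ i hi.not_gt)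
    (by simpa [hsum] using sum_e 1) fun j hj => (sum_e _).trans (congrFun hd ⟨j, hj⟩)
  exact funext fun i => (he i).symm.trans (congrFun this i)

end IsSaddlePoint

end MatrixGame

theorem stmt_16 (n m : ℕ) (A : Matrix (Fin n) (Fin m) ℝ)
    (xs : Fin n → ℝ) (ys : Fin m → ℝ)
    (hxs : (∀ i, 0 ≤ xs i) ∧ ∑ i, xs i = 1) (hys : (∀ j, 0 ≤ ys j) ∧ ∑ j, ys j = 1)
    (hsaddle : ∀ x : Fin n → ℝ, (∀ i, 0 ≤ x i) → ∑ i, x i = 1 →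
        ∀ y : Fin m → ℝ, (∀ j, 0 ≤ y j) → ∑ j, y j = 1 →
        x ⬝ᵥ A.mulVec ys ≤ xs ⬝ᵥ A.mulVec ys ∧ xs ⬝ᵥ A.mulVec ys ≤ xs ⬝ᵥ A.mulVec y)
    (huniq : ∀ x : Fin n → ℝ, (∀ i, 0 ≤ x i) → ∑ i, x i = 1 →
        ∀ y : Fin m → ℝ, (∀ j, 0 ≤ y j) → ∑ j, y j = 1 →
        (∀ x' : Fin n → ℝ, (∀ i, 0 ≤ x' i) → ∑ i, x' i = 1 →
         ∀ y' : Fin m → ℝ, (∀ j, 0 ≤ y' j) → ∑ j, y' j = 1 →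
         x' ⬝ᵥ A.mulVec y ≤ x ⬝ᵥ A.mulVec y ∧ x ⬝ᵥ A.mulVec y ≤ x ⬝ᵥ A.mulVec y') →
        x = xs ∧ y = ys)
    (B : Matrix {i // 0 < xs i} {j // 0 < ys j} ℝ)
    (hB : ∀ (i : {i // 0 < xs i}) (j : {j // 0 < ys j}), B i j = A i.1 j.1)
    (xt : {i // 0 < xs i} → ℝ) (yt : {j // 0 < ys j} → ℝ)
    (hBy : B.mulVec yt = 0) (hBx : B.transpose.mulVec xt = 0)
    (hsx : ∑ i, xt i = 0) (hsy : ∑ j, yt j = 0) :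
    xt = 0 ∧ yt = 0 := by
  have hsp : IsSaddlePoint A xs ys :=
    ⟨hxs, hys, fun x hx => (hsaddle x hx.1 hx.2 ys hys.1 hys.2).1,
      fun y hy => (hsaddle xs hxs.1 hxs.2 y hy.1 hy.2).2⟩
  have hsp_uniq : ∀ x y, IsSaddlePoint A x y → x = xs ∧ y = ys := fun x y h =>
    huniq x h.1.1 h.1.2 y h.2.1.1 h.2.1.2 fun x' hx'₀ hx'₁ y' hy'₀ hy'₁ =>
      ⟨h.2.2.1 x' ⟨hx'₀, hx'₁⟩, h.2.2.2 y' ⟨hy'₀, hy'₁⟩⟩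
  obtain rfl : B = A.submatrix Subtype.val Subtype.val := Matrix.ext hB
  refine ⟨hsp.eq_zero_of_vecMul_submatrix_eq_zero hsp_uniq xt hsx ?_,
    hsp.neg_transpose.eq_zero_of_vecMul_submatrix_eq_zero
      (fun y x h => (hsp_uniq x y (isSaddlePoint_neg_transpose_iff.1 h)).symm) yt hsy ?_⟩
  · rwa [← mulVec_transpose]
  · rw [submatrix_neg, Pi.neg_apply, Pi.neg_apply, ← transpose_submatrix, vecMul_neg,
      vecMul_transpose, hBy, neg_zero]
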